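/- arXiv:1508.02517 — 3 statements merged into one kernel-verified Lean document; each statement's English description precedes it below -/
import Mathlib

section
/- For every d ≥ 1, let G^0(d) be the path in ℤ^d that starts at the origin and whose successive edge directions are given by G(d) (an edge with direction i increments coordinate |i| by sgn(i) and leaves the other coordinates unchanged). Then the set of vertices of G^0(d) is exactly {0,1}^d, and the last vertex of G^0(d) is the point (0,…,0,1) whose d-th coordinate is 1 and whose other coordinates are 0. -/
open MeasureTheory

/-! ## Basic objects: points of `ℤ^d` (indexed by coordinates `1,…,d`), directions,
Gray codes, curves on the grid, inflation, well-foldedness, hyperorthogonality. -/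

/-- A point of the grid `ℤ^d`; only coordinates `1,…,d` are meaningful
(coordinate `0` and coordinates `> d` are kept equal to `0`). -/
abbrev Pt : Type := ℕ → ℤ

def ptZero : Pt := fun _ => 0

/-- `flipped i = 1` if `i < 0`, and `0` otherwise. -/
def flipped (i : ℤ) : ℤ := if i < 0 then 1 else 0

/-- Reversal of a free curve (sequence of directions): reverse the order and
negate every direction. -/
def grayRev (l : List ℤ) : List ℤ := (l.map (fun x => -x)).reverse

/-- The Gray-code free curve `G(d)`: `G(0)` is empty and `G(d)` is the
concatenation of `G(d-1)`, the single direction `d`, and the reverse of `G(d-1)`. -/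
def G : ℕ → List ℤ
  | 0 => []
  | d + 1 => G d ++ [((d : ℤ) + 1)] ++ grayRev (G d)

/-- Moving a point one step in direction `e`: coordinate `|e|` changes by `sgn e`. -/
def move (v : Pt) (e : ℤ) : Pt := fun j => if j = e.natAbs then v j + e.sign else v j

/-- The vertices of the path starting at `start` whose successive edge
directions are given by `dirs`. -/
def pathVertices (start : Pt) (dirs : List ℤ) : List Pt := dirs.scanl move start

/-- `e` is a valid direction in `d` dimensions: `e ∈ {−d,…,−1,1,…,d}`. -/
def IsDir (d : ℕ) (e : ℤ) : Prop := e ≠ 0 ∧ e.natAbs ≤ d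

/-- The (ordered) pair `(v,w)` is an edge with direction `e`. -/
def HasDir (d : ℕ) (v w : Pt) (e : ℤ) : Prop := IsDir d e ∧ w = move v e

/-- `(v,w)` is an edge of the grid. -/
def IsEdge (d : ℕ) (v w : Pt) : Prop := ∃ e, HasDir d v w e

/-- A curve on the grid: a finite sequence of distinct points in which each pair of
consecutive points differs by `±1` in exactly one coordinate. -/
def IsGridCurve (d : ℕ) (c : List Pt) : Prop := c.Nodup ∧ c.Chain' (IsEdge d)

/-- Membership in the cube `{0,…,2^k−1}^d` (unused coordinates are `0`). -/
def InCube (d k : ℕ) (v : Pt) : Prop :=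
  (∀ j, 1 ≤ j → j ≤ d → 0 ≤ v j ∧ v j < 2 ^ k) ∧ (∀ j, j = 0 ∨ d < j → v j = 0)

/-- A `k`-curve: a Hamiltonian path on the grid `{0,…,2^k−1}^d`. -/
def IsKCurve (d k : ℕ) (c : List Pt) : Prop :=
  IsGridCurve d c ∧ ∀ v : Pt, v ∈ c ↔ InCube d k v

/-- A signed permutation of `{−d,…,−1,1,…,d}`: a bijection `σ` of this set
with `σ(−k) = −σ(k)` (bundled with its inverse). -/
structure SignedPerm (d : ℕ) where
  f : ℤ → ℤ
  inv : ℤ → ℤ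
  maps : ∀ i : ℤ, IsDir d i → IsDir d (f i)
  maps_inv : ∀ i : ℤ, IsDir d i → IsDir d (inv i)
  neg : ∀ i : ℤ, f (-i) = -f i
  neg_inv : ∀ i : ℤ, inv (-i) = -inv i
  left_inv : ∀ i : ℤ, IsDir d i → inv (f i) = i
  right_inv : ∀ i : ℤ, IsDir d i → f (inv i) = i

/-- The 1-curve `σ(G(d))` (an isometric image of the Gray-code curve) placed in the
cube `2·v + {0,1}^d`; its entry corner is forced to be
`2·v + (flipped(σ⁻¹(1)),…,flipped(σ⁻¹(d)))`. -/
def grayPiece (d : ℕ) (σ : SignedPerm d) (v : Pt) : List Pt :=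
  pathVertices (fun j => 2 * v j + if 1 ≤ j ∧ j ≤ d then flipped (σ.inv (j : ℤ)) else 0)
    ((G d).map σ.f)

/-- `B` is obtained from `A` by (well-folded) inflation: each vertex of `A` is
replaced by an isometric image of `G(d)` in the corresponding subcube, and the
result is a valid curve on the grid. (Reversed images of `G(d)` are themselves
images of `G(d)` under another signed permutation, so no generality is lost.) -/
def IsInflationWF (d : ℕ) (A B : List Pt) : Prop :=
  ∃ σ : ℕ → SignedPerm d,
    B = ((List.range A.length).map (fun i => grayPiece d (σ i) (A.getD i ptZero))).flatten ∧
    IsGridCurve d B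

/-- A curve is well-folded if it is a single vertex or is obtained by inflation from a
well-folded curve, every inserted 1-curve being an isometric image of `G(d)`. -/
inductive WellFolded (d : ℕ) : List Pt → Prop
  | single (v : Pt) : WellFolded d [v]
  | inflate {A B : List Pt} : WellFolded d A → IsInflationWF d A B → WellFolded d B

/-- The set of axes in which `v` and `w` differ (for a grid edge this is the
singleton of its axis). -/
def axesOfEdge (d : ℕ) (v w : Pt) : Finset ℕ :=
  (Finset.range (d + 1)).filter (fun j => v j ≠ w j)

/-- Hyperorthogonality: for every `n ∈ {0,…,d−2}`, every `2^n` consecutive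
edges of the curve have exactly `n+1` distinct axes. -/
def Hyperorthogonal (d : ℕ) (c : List Pt) : Prop :=
  ∀ n, n ≤ d - 2 → ∀ s, s + 2 ^ n + 1 ≤ c.length →
    ((Finset.range (2 ^ n)).biUnion
      (fun t => axesOfEdge d (c.getD (s + t) ptZero) (c.getD (s + t + 1) ptZero))).card = n + 1

/-- The depth of a direction `a` in a signed permutation `σ`:
`0` if `|a| ∈ {|σ(d)|,|σ(d−1)|}`, and otherwise the number `j` with `|σ(d−1−j)| = |a|`. -/
def depth (d : ℕ) (σ : SignedPerm d) (a : ℤ) : ℕ :=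
  if (σ.inv a).natAbs = d ∨ (σ.inv a).natAbs = d - 1 then 0 else d - 1 - (σ.inv a).natAbs

/-- The (signed) direction of the edge from `v` to `w`
(for a grid edge with axis `j` this is `±j`). -/
def dirOf (d : ℕ) (v w : Pt) : ℤ :=
  ∑ j ∈ (Finset.range (d + 1)).filter (fun j => v j ≠ w j), (j : ℤ) * (w j - v j)

/-- The axis of the edge from `v` to `w`. -/
def axisOf (d : ℕ) (v w : Pt) : ℕ := (dirOf d v w).natAbs

/-! ## Extended curves -/

/-- For the extended curve with entry-edge direction `en`, vertex list `c` and
exit-edge direction `ex`, the axis of its `t`-th edge, where the entry edge has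
index `0`, the internal edges have indices `1,…,c.length − 1` (edge `t` joins
`c[t−1]` and `c[t]`) and the exit edge has index `c.length`. -/
def axE (d : ℕ) (en : ℤ) (c : List Pt) (ex : ℤ) (t : ℕ) : ℕ :=
  if t = 0 then en.natAbs
  else if t = c.length then ex.natAbs
  else axisOf d (c.getD (t - 1) ptZero) (c.getD t ptZero)

/-- The edge distance of the axis `a` to the vertex with index `p` within the
extended curve `(en, c, ex)`: one less than the number of edges of the smallest
contiguous subcurve containing this vertex and an edge with axis `a`. -/
noncomputable def edgedistE (d : ℕ) (en : ℤ) (c : List Pt) (ex : ℤ) (p a : ℕ) : ℕ :=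
  sInf {m | ∃ t, t ≤ c.length ∧ axE d en c ex t = a ∧
    m = if t ≤ p then p - t else t - p - 1}

/-- Hyperorthogonality of an extended curve: every `2^n` consecutive edges
(including the entry and exit edges) have exactly `n+1` distinct axes, for all
`n ∈ {0,…,d−2}`. -/
def HyperorthogonalE (d : ℕ) (en : ℤ) (c : List Pt) (ex : ℤ) : Prop :=
  ∀ n, n ≤ d - 2 → ∀ s, s + 2 ^ n ≤ c.length + 1 →
    ((Finset.range (2 ^ n)).image (fun t => axE d en c ex (s + t))).card = n + 1

/-- The sequence of approximating curves determined by a system of signed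
permutations `σ k i` (one for each vertex `i` of the `k`-th curve):
`A_0` is the single vertex at the origin and `A_{k+1}` is obtained from `A_k` by
inflation, vertex `i` being replaced by the 1-curve `σ_{k,i}(G(d))`. -/
def buildCurve (d : ℕ) (σ : ℕ → ℕ → SignedPerm d) : ℕ → List Pt
  | 0 => [ptZero]
  | k + 1 =>
    ((List.range (buildCurve d σ k).length).map
      (fun i => grayPiece d (σ k i) ((buildCurve d σ k).getD i ptZero))).flatten

/-- `f : [0,1] → [0,1]^d` is the space-filling curve approximated by the curves
`A k`: the `i`-th vertex of `A k` corresponds to the cube `2^{−k}(v_{k,i} + [0,1]^d)`,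
and `f` maps `[i/2^{dk},(i+1)/2^{dk}]` into that cube. -/
def Approximates (d : ℕ) (A : ℕ → List Pt) (f : ℝ → Fin d → ℝ) : Prop :=
  ∀ k i, i < (A k).length → ∀ t : ℝ,
    (i : ℝ) / 2 ^ (d * k) ≤ t → t ≤ ((i : ℝ) + 1) / 2 ^ (d * k) →
    ∀ j : Fin d,
      ((((A k).getD i ptZero) ((j : ℕ) + 1) : ℝ) / 2 ^ k ≤ f t j ∧
        f t j ≤ ((((A k).getD i ptZero) ((j : ℕ) + 1) : ℝ) + 1) / 2 ^ k)

/-- The smallest axis-aligned box containing a (nonempty, bounded) set `S ⊆ ℝ^d`. -/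
noncomputable def bbox (d : ℕ) (S : Set (Fin d → ℝ)) : Set (Fin d → ℝ) :=
  Set.univ.pi fun j => Set.Icc (sInf ((fun p => p j) '' S)) (sSup ((fun p => p j) '' S))

/-! ## General inflation (arbitrary 1-curves), isometric copies, self-similarity -/

/-- `c` is a 1-curve on the translated unit cube `2·base + {0,1}^d`. -/
def IsUnitCurveAt (d : ℕ) (base : Pt) (c : List Pt) : Prop :=
  IsGridCurve d c ∧
    ∀ v : Pt, v ∈ c ↔
      ((∀ j, 1 ≤ j → j ≤ d → v j = 2 * base j ∨ v j = 2 * base j + 1) ∧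
        ∀ j, j = 0 ∨ d < j → v j = 2 * base j)

/-- `B` is obtained from `A` by (general) inflation: each vertex `v_i` of `A` is
replaced by a 1-curve on `2·v_i + {0,1}^d`, and each edge of `A` with direction `e_i`
is replaced by an edge of the same direction connecting consecutive 1-curves. -/
def IsInflation (d : ℕ) (A B : List Pt) : Prop :=
  ∃ C : ℕ → List Pt,
    B = ((List.range A.length).map C).flatten ∧
    IsGridCurve d B ∧
    (∀ i, i < A.length → IsUnitCurveAt d (A.getD i ptZero) (C i)) ∧
    (∀ i, i + 1 < A.length → ∀ e : ℤ,
      HasDir d (A.getD i ptZero) (A.getD (i + 1) ptZero) e →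
      HasDir d ((C i).getLastD ptZero) ((C (i + 1)).headD ptZero) e)

/-- `InflationChain d k X`: `X` is constructed from a single vertex by `k` steps
of inflation. -/
inductive InflationChain (d : ℕ) : ℕ → List Pt → Prop
  | base (v : Pt) : InflationChain d 0 [v]
  | step {k : ℕ} {A B : List Pt} :
      InflationChain d k A → IsInflation d A B → InflationChain d (k + 1) B

/-- The hyperoctahedral symmetry of the cube `{0,…,M}^d` given by the signed
permutation `σ`: the coordinate `|σ⁻¹(j)|` of the argument is sent to coordinate `j`,
reflected (`x ↦ M − x`) whenever `σ⁻¹(j) < 0`. -/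
def applySP (d : ℕ) (M : ℤ) (σ : SignedPerm d) (x : Pt) : Pt :=
  fun j =>
    if 1 ≤ j ∧ j ≤ d then
      if 0 ≤ σ.inv (j : ℤ) then x (σ.inv (j : ℤ)).natAbs
      else M - x (σ.inv (j : ℤ)).natAbs
    else x j

/-- `B` is an isometric copy of the curve `A` (living in a cube `{0,…,M}^d`):
a hyperoctahedral symmetry, possibly composed with reversal, followed by a translation. -/
def IsometricCopy (d : ℕ) (M : ℤ) (A B : List Pt) : Prop :=
  ∃ σ : SignedPerm d, ∃ rev : Bool, ∃ tr : Pt,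
    B = (if rev then A.reverse else A).map (fun v => fun j => applySP d M σ v j + tr j)

/-- Self-similarity of one approximation step: `B` is the concatenation of `2^d`
isometric copies of the `k`-curve `A`, connected by single edges. -/
def SelfSimilarStep (d k : ℕ) (A B : List Pt) : Prop :=
  ∃ parts : ℕ → List Pt,
    B = ((List.range (2 ^ d)).map parts).flatten ∧
    IsGridCurve d B ∧
    ∀ m, m < 2 ^ d → IsometricCopy d ((2 : ℤ) ^ k - 1) A (parts m)

/-- Coordinate `a ∈ {1,…,d}` of a point of `ℝ^d`. -/
noncomputable def coordR (d : ℕ) (x : Fin d → ℝ) (a : ℕ) : ℝ :=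
  if h : a - 1 < d then x ⟨a - 1, h⟩ else 0

/-- The hyperoctahedral symmetry of the unit cube `[0,1]^d` given by the signed
permutation `σ`. -/
noncomputable def applySPR (d : ℕ) (σ : SignedPerm d) (x : Fin d → ℝ) : Fin d → ℝ :=
  fun j =>
    if 0 ≤ σ.inv ((j : ℕ) + 1 : ℤ) then coordR d x (σ.inv ((j : ℕ) + 1 : ℤ)).natAbs
    else 1 - coordR d x (σ.inv ((j : ℕ) + 1 : ℤ)).natAbs

/-- `f` is a self-similar hyperorthogonal well-folded space-filling curve:
it is approximated by a sequence of `k`-curves, starting from a single vertex,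
in which each curve is obtained from the previous one by well-folded inflation,
all approximating curves are hyperorthogonal, and each approximating curve is the
concatenation of `2^d` isometric copies of the previous one. -/
def SSHOWFcurve (d : ℕ) (f : ℝ → Fin d → ℝ) : Prop :=
  ∃ A : ℕ → List Pt,
    A 0 = [ptZero] ∧
    (∀ k, IsInflationWF d (A k) (A (k + 1))) ∧
    (∀ k, IsKCurve d k (A k)) ∧
    (∀ k, Hyperorthogonal d (A k)) ∧
    (∀ k, SelfSimilarStep d k (A k) (A (k + 1))) ∧
    Approximates d A f

/-- Two space-filling curves are the same up to hyperoctahedral symmetry and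
reversal. -/
def curveEquiv (d : ℕ) (f g : ℝ → Fin d → ℝ) : Prop :=
  ∃ τ : SignedPerm d,
    (∀ t ∈ Set.Icc (0 : ℝ) 1, g t = applySPR d τ (f t)) ∨
    (∀ t ∈ Set.Icc (0 : ℝ) 1, g t = applySPR d τ (f (1 - t)))

/-- The direction of the entry edge of the extended child curve `C'_m` within the
inflation of the extended curve `(e0, A, e1)`. -/
def childEntryDir (d : ℕ) (A : List Pt) (e0 : ℤ) (m : ℕ) : ℤ :=
  if m = 0 then e0 else dirOf d (A.getD (m - 1) ptZero) (A.getD m ptZero)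

/-- The direction of the exit edge of the extended child curve `C'_m` within the
inflation of the extended curve `(e0, A, e1)`. -/
def childExitDir (d : ℕ) (A : List Pt) (e1 : ℤ) (m : ℕ) : ℤ :=
  if m + 1 = A.length then e1 else dirOf d (A.getD m ptZero) (A.getD (m + 1) ptZero)

/-- The local edge distance of the axis `a` to the vertex with index `i` within the
extended approximating curve `A'_k` (entry direction `e0`, exit direction `e1`)
of the system `σ`: the edge distance within the extended child curve of `A'_{k-1}`
containing this vertex. -/
noncomputable def led (d : ℕ) (σ : ℕ → ℕ → SignedPerm d) (e0 e1 : ℤ) :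
    ℕ → ℕ → ℕ → ℕ
  | 0, _, a => edgedistE d e0 (buildCurve d σ 0) e1 0 a
  | k + 1, i, a =>
    edgedistE d (childEntryDir d (buildCurve d σ k) e0 (i / 2 ^ d))
      (grayPiece d (σ k (i / 2 ^ d)) ((buildCurve d σ k).getD (i / 2 ^ d) ptZero))
      (childExitDir d (buildCurve d σ k) e1 (i / 2 ^ d))
      (i % 2 ^ d) a

/-- The system of permutations `σ` describes a sequence of extended hyperorthogonal
well-folded approximating curves with entry direction `e0` and exit direction `e1`,
in which the signs of `σ_{k,1}⁻¹` are prescribed by `s`, and the elements of every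
unsigned permutation `|σ_{k,i}|` are sorted by decreasing local edge distance. -/
def GoodSystem (d : ℕ) (e0 e1 : ℤ) (s : ℕ → ℕ → ℤ) (σ : ℕ → ℕ → SignedPerm d) : Prop :=
  (∀ k, IsKCurve d k (buildCurve d σ k)) ∧
  (∀ k, HyperorthogonalE d e0 (buildCurve d σ k) e1) ∧
  (∀ k, ¬ InCube d k (move ((buildCurve d σ k).headD ptZero) (-e0))) ∧
  (∀ k, ¬ InCube d k (move ((buildCurve d σ k).getLastD ptZero) e1)) ∧
  (∀ k j, 1 ≤ j → j ≤ d → Int.sign ((σ k 0).inv (j : ℤ)) = s k j) ∧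
  (∀ k i, i < (buildCurve d σ k).length →
    ∀ p q : ℕ, 1 ≤ p → p ≤ q → q ≤ d →
      led d σ e0 e1 k i (((σ k i).f (q : ℤ)).natAbs) ≤
        led d σ e0 e1 k i (((σ k i).f (p : ℤ)).natAbs))

/-- The Butz-Moore generalization of the Hilbert curve, described by the conditions
on its system of signed permutations: `|σ_{k,i}(d)| = 1` for the first and last
subcube, `|σ_{k,i}(d)| = max(|e_{k,i−1}|,|e_{k,i}|)` in between, all unsigned
permutations are cyclic rotations, and the entry is at the origin. -/
def ButzMoore (d : ℕ) (σ : ℕ → ℕ → SignedPerm d) : Prop :=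
  (∀ k, IsKCurve d k (buildCurve d σ k)) ∧
  (∀ k i, i < 2 ^ (d * k) → (i = 0 ∨ i = 2 ^ (d * k) - 1) →
    ((σ k i).f (d : ℤ)).natAbs = 1) ∧
  (∀ k i, 0 < i → i + 1 < 2 ^ (d * k) →
    ((σ k i).f (d : ℤ)).natAbs =
      max (dirOf d ((buildCurve d σ k).getD (i - 1) ptZero)
            ((buildCurve d σ k).getD i ptZero)).natAbs
          (dirOf d ((buildCurve d σ k).getD i ptZero)
            ((buildCurve d σ k).getD (i + 1) ptZero)).natAbs) ∧
  (∀ k i j, 1 ≤ j → j ≤ d →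
    ((σ k i).f (j : ℤ)).natAbs = ((((σ k i).f (d : ℤ)).natAbs + j - 1) % d) + 1) ∧
  (∀ k j, 1 ≤ j → j ≤ d → 0 ≤ (σ k 0).inv (j : ℤ))

/-! ## Generalized curves (diagonal edges allowed) -/

/-- A generalized edge: `w ≠ v` and every coordinate changes by at most 1. -/
def IsGenEdge (d : ℕ) (v w : Pt) : Prop :=
  v ≠ w ∧ (∀ j, 1 ≤ j → j ≤ d → |w j - v j| ≤ 1) ∧ ∀ j, j = 0 ∨ d < j → w j = v j

/-- A generalized curve on the grid (diagonal edges allowed). -/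
def IsGenCurve (d : ℕ) (c : List Pt) : Prop := c.Nodup ∧ c.Chain' (IsGenEdge d)

/-- Generalized inflation: vertices are replaced by 1-curves on the corresponding
subcubes, consecutive 1-curves being joined by a single (possibly diagonal) edge. -/
def IsGenInflation (d : ℕ) (A B : List Pt) : Prop :=
  ∃ C : ℕ → List Pt,
    B = ((List.range A.length).map C).flatten ∧
    IsGenCurve d B ∧
    (∀ i, i < A.length → IsUnitCurveAt d (A.getD i ptZero) (C i))

/-! Reversing a direction sequence retraces its path backwards, so the path of
`G(d+1) = G(d) ++ [d+1] ++ grayRev (G(d))` is the path `P` of `G(d)` followed by `P` reversed and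
shifted by the unit vector `e_{d+1}` (the reflected Gray code). By induction its vertex set is
`{0,1}^d × {0}` together with `{0,1}^d × {1}`, and its last vertex is the first vertex of `P`,
the origin, shifted by `e_{d+1}`. -/

lemma move_eq_add_single (v : Pt) (e : ℤ) : move v e = v + Pi.single e.natAbs e.sign := by
  funext j
  by_cases h : j = e.natAbs <;> simp [move, h]

lemma move_add (v t : Pt) (e : ℤ) : move (v + t) e = move v e + t := by
  simp only [move_eq_add_single, add_right_comm]

lemma move_move_neg (v : Pt) (e : ℤ) : move (move v e) (-e) = v := by
  rw [move_eq_add_single, move_eq_add_single, Int.natAbs_neg, Int.sign_neg, Pi.single_neg,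
    add_neg_cancel_right]

lemma pathVertices_add (s t : Pt) (l : List ℤ) :
    pathVertices (s + t) l = (pathVertices s l).map (· + t) := by
  induction l generalizing s with
  | nil => rfl
  | cons e l ih =>
    simp only [pathVertices] at ih ⊢
    rw [List.scanl_cons, List.scanl_cons, move_add, ih, List.map_cons]

lemma pathVertices_grayRev (s : Pt) (l : List ℤ) :
    pathVertices (l.foldl move s) (grayRev l) = (pathVertices s l).reverse := by
  induction l using List.reverseRecOn with
  | nil => rfl
  | append_singleton l e ih =>
    have hrev : grayRev (l ++ [e]) = -e :: grayRev l := by simp [grayRev]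
    simp only [pathVertices, hrev, List.scanl_cons, List.foldl_append, List.foldl_cons,
      List.foldl_nil, move_move_neg, List.scanl_append, List.reverse_append] at ih ⊢
    simp [ih]

lemma pathVertices_reflect (s : Pt) (l : List ℤ) (e : ℤ) :
    pathVertices s (l ++ [e] ++ grayRev l) =
      pathVertices s l ++ (pathVertices s l).reverse.map (· + Pi.single e.natAbs e.sign) := by
  rw [List.append_assoc, pathVertices, List.scanl_append, List.singleton_append,
    List.scanl_cons, List.tail_cons, move_eq_add_single]
  change pathVertices s l ++ pathVertices (_ + _) (grayRev l) = _
  rw [pathVertices_add, pathVertices_grayRev]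

lemma pathVertices_G_succ (d : ℕ) :
    pathVertices ptZero (G (d + 1)) =
      pathVertices ptZero (G d) ++
        (pathVertices ptZero (G d)).reverse.map (· + Pi.single (d + 1) 1) := by
  have haxis : ((d : ℤ) + 1).natAbs = d + 1 := by omega
  have hsign : ((d : ℤ) + 1).sign = 1 := Int.sign_eq_one_of_pos (by omega)
  rw [G, pathVertices_reflect, haxis, hsign]

def binaryCube (d : ℕ) : Set Pt :=
  {v | (∀ j, 1 ≤ j → j ≤ d → v j = 0 ∨ v j = 1) ∧ ∀ j, j = 0 ∨ d < j → v j = 0}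

lemma binaryCube_zero : binaryCube 0 = {0} := by
  ext v
  simp only [binaryCube, Set.mem_ofPred_eq, Set.mem_singleton_iff, funext_iff, Pi.zero_apply]
  exact ⟨fun h j => h.2 j (by omega), fun h => ⟨fun j h1 h2 => by omega, fun j _ => h j⟩⟩

lemma mem_binaryCube_succ (d : ℕ) (v : Pt) :
    v ∈ binaryCube (d + 1) ↔ v ∈ binaryCube d ∨ v - Pi.single (d + 1) 1 ∈ binaryCube d := by
  simp only [binaryCube, Set.mem_ofPred_eq, Pi.sub_apply, Pi.single_apply]
  constructor
  · rintro ⟨hbin, hout⟩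
    rcases hbin (d + 1) (by omega) le_rfl with htop | htop
    · left; grind
    · right; grind
  · grind

lemma mem_pathVertices_G (d : ℕ) (v : Pt) :
    v ∈ pathVertices ptZero (G d) ↔ v ∈ binaryCube d := by
  induction d generalizing v with
  | zero => rw [binaryCube_zero]; exact List.mem_singleton
  | succ d ih =>
    rw [pathVertices_G_succ, mem_binaryCube_succ, ← ih, ← ih, List.mem_append, List.mem_map]
    simp only [List.mem_reverse]
    exact or_congr_right ⟨by rintro ⟨w, hw, rfl⟩; simpa, fun h => ⟨_, h, sub_add_cancel _ _⟩⟩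

lemma getLast?_pathVertices_G (d : ℕ) :
    (pathVertices ptZero (G (d + 1))).getLast? = some (Pi.single (d + 1) 1) := by
  rw [pathVertices_G_succ, List.getLast?_append, List.getLast?_map, List.getLast?_reverse,
    pathVertices, List.head?_scanl]
  exact congrArg some (zero_add _)

/-- For `d ≥ 1`, the path `G⁰(d)` starting at the origin with edge
directions `G(d)` has vertex set exactly `{0,1}^d`, and its last vertex is the
point `(0,…,0,1)` whose `d`-th coordinate is `1` and whose other coordinates are `0`. -/
theorem gray_path_vertices (d : ℕ) (hd : 1 ≤ d) :
    (∀ v : Pt, v ∈ pathVertices ptZero (G d) ↔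
      ((∀ j, 1 ≤ j → j ≤ d → v j = 0 ∨ v j = 1) ∧ ∀ j, j = 0 ∨ d < j → v j = 0)) ∧
    (pathVertices ptZero (G d)).getLast? =
      some (fun j => if j = d then 1 else 0) := by
  refine ⟨mem_pathVertices_G d, ?_⟩
  obtain ⟨d, rfl⟩ := Nat.exists_eq_add_of_le' hd
  rw [getLast?_pathVertices_G]
  exact congrArg some (funext fun j => Pi.single_apply _ _ _)
end

section
/- For every d ≥ 1 and every n with 1 ≤ n ≤ 2^d − 1, the set of axes of the first n directions of G(d) is exactly {1,…,m}, where m = 1 + ⌊log₂ n⌋ = ⌈log₂(n+1)⌉; the same holds for the set of axes of the last n directions of G(d). -/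
open MeasureTheory

/-! The axis sequence of `G(d+1)` is that of `G(d)`, then `d+1`, then that of `G(d)` reversed,
so it is a palindrome and suffixes of `G(d)` have the same axes as prefixes. Moreover `G(k)` is a
prefix of `G(d)` for `k ≤ d`, so when `2^k ≤ n < 2^(k+1)` the first `n` directions of `G(d)` lie
in `G(k+1)` (axes `≤ k+1`) and contain `G(k)` followed by `k+1` (all axes `1,…,k+1`). -/

theorem Nat.clog_add_one_eq_log_add_one {b n : ℕ} (hb : 1 < b) (hn : n ≠ 0) :
    Nat.clog b (n + 1) = Nat.log b n + 1 :=
  le_antisymm ((Nat.clog_le_iff_le_pow hb).2 (Nat.lt_pow_succ_log_self hb n))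
    ((Nat.lt_clog_iff_pow_lt hb).2 (Nat.lt_succ_of_le (Nat.pow_log_le_self b hn)))

lemma length_G (d : ℕ) : (G d).length = 2 ^ d - 1 := by
  induction d with
  | zero => rfl
  | succ d ih =>
    simp only [G, grayRev, List.length_append, List.length_reverse, List.length_map, ih,
      List.length_singleton, pow_succ]
    have := d.one_le_two_pow
    omega

lemma map_natAbs_G_succ (d : ℕ) :
    (G (d + 1)).map Int.natAbs =
      (G d).map Int.natAbs ++ [d + 1] ++ ((G d).map Int.natAbs).reverse := by
  simp only [G, grayRev, List.map_append, List.map_reverse, List.map_map, Function.comp_def,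
    Int.natAbs_neg, List.map_cons, List.map_nil]
  norm_cast

lemma reverse_map_natAbs_G (d : ℕ) : ((G d).map Int.natAbs).reverse = (G d).map Int.natAbs := by
  induction d with
  | zero => rfl
  | succ d ih => simp [map_natAbs_G_succ, ih]

lemma mem_map_natAbs_G {d a : ℕ} : a ∈ (G d).map Int.natAbs ↔ 1 ≤ a ∧ a ≤ d := by
  induction d with
  | zero => simp only [G, List.map_nil, List.not_mem_nil, false_iff]; omega
  | succ d ih =>
    simp only [map_natAbs_G_succ, List.mem_append, List.mem_reverse, List.mem_singleton, ih]
    omega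

lemma G_prefix_of_le {k d : ℕ} (h : k ≤ d) : G k <+: G d := by
  induction d, h using Nat.le_induction with
  | base => exact List.prefix_rfl
  | succ d _ ih =>
    refine ih.trans ?_
    rw [G, List.append_assoc]
    exact List.prefix_append _ _

lemma take_G_of_le {k d n : ℕ} (hkd : k ≤ d) (hn : n ≤ 2 ^ k - 1) :
    (G d).take n = (G k).take n := by
  rw [List.prefix_iff_eq_take.1 (G_prefix_of_le hkd), List.take_take, length_G, min_eq_left hn]

lemma mem_map_natAbs_take_G_succ {k n a : ℕ} (hk : 2 ^ k ≤ n) :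
    a ∈ ((G (k + 1)).take n).map Int.natAbs ↔ 1 ≤ a ∧ a ≤ k + 1 := by
  refine ⟨fun ha => mem_map_natAbs_G.1 (List.map_subset _ (List.take_subset _ _) ha), fun ha => ?_⟩
  have hhead : G k ++ [(k : ℤ) + 1] <+: (G (k + 1)).take n := by
    refine List.prefix_take_iff.2 ⟨List.prefix_append _ _, ?_⟩
    rw [List.length_append, length_G, List.length_singleton]
    have := k.one_le_two_pow
    omega
  refine List.map_subset _ hhead.subset ?_
  rw [List.map_append, List.mem_append, mem_map_natAbs_G]
  by_cases hak : a ≤ k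
  · exact .inl ⟨ha.1, hak⟩
  · exact .inr (List.mem_singleton.2 (by omega))

lemma mem_map_natAbs_take_G {d n a : ℕ} (hn : n ≠ 0) (hnd : n ≤ 2 ^ d - 1) :
    a ∈ ((G d).take n).map Int.natAbs ↔ 1 ≤ a ∧ a ≤ Nat.log 2 n + 1 := by
  have hn_lt : n < 2 ^ (Nat.log 2 n + 1) := Nat.lt_pow_succ_log_self one_lt_two n
  have hlog : Nat.log 2 n + 1 ≤ d := Nat.log_lt_of_lt_pow hn (by omega)
  rw [take_G_of_le hlog (by omega)]
  exact mem_map_natAbs_take_G_succ (Nat.pow_log_le_self 2 hn)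

theorem gray_prefix_axes_general (d n : ℕ) (hn1 : 1 ≤ n) (hn2 : n ≤ 2 ^ d - 1) :
    Nat.log 2 n + 1 = Nat.clog 2 (n + 1) ∧
    {a : ℕ | ∃ e ∈ (G d).take n, e.natAbs = a} = Set.Icc 1 (Nat.log 2 n + 1) ∧
    {a : ℕ | ∃ e ∈ (G d).reverse.take n, e.natAbs = a} =
      Set.Icc 1 (Nat.log 2 n + 1) := by
  have hn : n ≠ 0 := Nat.one_le_iff_ne_zero.1 hn1
  refine ⟨(Nat.clog_add_one_eq_log_add_one one_lt_two hn).symm, ?_, ?_⟩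
  · ext a
    rw [Set.mem_ofPred_eq, ← List.mem_map]
    exact mem_map_natAbs_take_G hn hn2
  · ext a
    rw [Set.mem_ofPred_eq, ← List.mem_map, List.map_take, List.map_reverse,
      reverse_map_natAbs_G, ← List.map_take]
    exact mem_map_natAbs_take_G hn hn2

/-- For `d ≥ 1` and `1 ≤ n ≤ 2^d − 1`, the set of axes of the first
`n` directions of `G(d)` is exactly `{1,…,m}` with
`m = 1 + ⌊log₂ n⌋ = ⌈log₂(n+1)⌉`, and the same holds for the last `n` directions. -/
theorem gray_prefix_axes (d n : ℕ) (hd : 1 ≤ d) (hn1 : 1 ≤ n) (hn2 : n ≤ 2 ^ d - 1) :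
    Nat.log 2 n + 1 = Nat.clog 2 (n + 1) ∧
    {a : ℕ | ∃ e ∈ (G d).take n, e.natAbs = a} = Set.Icc 1 (Nat.log 2 n + 1) ∧
    {a : ℕ | ∃ e ∈ (G d).reverse.take n, e.natAbs = a} =
      Set.Icc 1 (Nat.log 2 n + 1) :=
  gray_prefix_axes_general d n hn1 hn2
end

section
/- Let d ≥ 1 and let σ be a signed permutation of {−d,…,−1,1,…,d}. Let P be the path in ℤ^d with vertex set {0,1}^d whose successive edge directions are σ applied to the directions of G(d). Then: (i) the first vertex a of P satisfies a[j] = flipped(σ^{−1}(j)) for every j ∈ {1,…,d}; (ii) the direction of the vector from the first vertex to the last vertex of P is σ(d); and (iii) the last vertex b of P satisfies b[j] = 1 − a[j] for j = |σ(d)| and b[j] = a[j] for every j ≠ |σ(d)|. -/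
open MeasureTheory

/-! In `G(d)` the first edge along axis `i` is `+i`, preceded by `G(i-1)`, which uses only
smaller axes. Hence `σ(G(d))` first moves along axis `j` by the edge `σ(i)`, `i = |σ⁻¹(j)|`,
whose sign is that of `σ⁻¹(j)`; since the path stays in `{0,1}^d`, coordinate `j` starts at `0`
if this edge goes up and at `1` if it goes down.
Moves commute, so the last vertex is the first one plus the sum of the unit steps. A direction
sequence and its reverse cancel, so the steps of `σ(G(d))` sum to the unit vector of `σ(d)`. -/

lemma move_eq_add (v : Pt) (e : ℤ) : move v e = v + move 0 e := by
  funext j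
  simp only [move, Pi.add_apply, Pi.zero_apply]
  split_ifs <;> simp

lemma move_zero_neg (e : ℤ) : move 0 (-e) = -move 0 e := by
  funext j
  simp only [move, Int.natAbs_neg, Int.sign_neg, Pi.zero_apply, Pi.neg_apply]
  split_ifs <;> simp

lemma foldl_move_eq_add_sum (a : Pt) (l : List ℤ) :
    l.foldl move a = a + (l.map (move 0)).sum := by
  induction l generalizing a with
  | nil => simp
  | cons e l ih => rw [List.foldl_cons, ih, move_eq_add, List.map_cons, List.sum_cons, add_assoc]

lemma sum_map_move_grayRev (l : List ℤ) :
    ((grayRev l).map (move 0)).sum = -(l.map (move 0)).sum := by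
  rw [List.sum_neg]
  simp [grayRev, Function.comp_def, move_zero_neg]

lemma map_grayRev {f : ℤ → ℤ} (hf : ∀ x, f (-x) = -f x) (l : List ℤ) :
    (grayRev l).map f = grayRev (l.map f) := by
  simp [grayRev, Function.comp_def, hf]

lemma sum_map_move_map_G {f : ℤ → ℤ} (hf : ∀ x, f (-x) = -f x) (d : ℕ) :
    (((G d).map f).map (move 0)).sum = move 0 (f d) := by
  cases d with
  | zero =>
    have hf0 : f 0 = 0 := by have := hf 0; rw [neg_zero] at this; omega
    funext j
    simp [G, move, hf0]
  | succ m =>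
    simp only [G, List.map_append, map_grayRev hf, List.sum_append, sum_map_move_grayRev,
      List.map_cons, List.map_nil, List.sum_cons, List.sum_nil]
    push_cast
    abel

lemma foldl_move_map_G {f : ℤ → ℤ} (hf : ∀ x, f (-x) = -f x) (a : Pt) (d : ℕ) :
    ((G d).map f).foldl move a = move a (f d) := by
  rw [foldl_move_eq_add_sum, sum_map_move_map_G hf, ← move_eq_add]

lemma isDir_of_mem_G {d : ℕ} {e : ℤ} (he : e ∈ G d) : IsDir d e := by
  induction d generalizing e with
  | zero => simp [G] at he
  | succ d ih =>
    simp only [G, grayRev, List.mem_append, List.mem_reverse, List.mem_map,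
      List.mem_singleton] at he
    rcases he with (he | rfl) | he
    · exact ⟨(ih he).1, (ih he).2.trans d.le_succ⟩
    · exact ⟨by omega, by omega⟩
    · obtain ⟨x, hx, rfl⟩ := he
      exact ⟨neg_ne_zero.mpr (ih hx).1, by simpa using (ih hx).2.trans d.le_succ⟩

lemma G_eq_append_cons {i d : ℕ} (hi : 1 ≤ i) (hid : i ≤ d) :
    ∃ q, G d = G (i - 1) ++ (i : ℤ) :: q := by
  induction d with
  | zero => omega
  | succ d ih =>
    rcases hid.lt_or_eq with hid | rfl
    · obtain ⟨q, hq⟩ := ih (by omega)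
      exact ⟨q ++ [(d : ℤ) + 1] ++ grayRev (G d), by simp [G, hq]⟩
    · exact ⟨grayRev (G d), by simp [G]⟩

lemma foldl_move_apply_of_forall_natAbs_ne {l : List ℤ} {j : ℕ} (h : ∀ e ∈ l, e.natAbs ≠ j)
    (a : Pt) : l.foldl move a j = a j := by
  induction l generalizing a with
  | nil => rfl
  | cons e l ih =>
    rw [List.foldl_cons, ih (fun x hx => h x (List.mem_cons_of_mem e hx))]
    simp [move, Ne.symm (h e List.mem_cons_self)]

lemma foldl_move_mem_pathVertices (a : Pt) (l₁ l₂ : List ℤ) :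
    l₁.foldl move a ∈ pathVertices a (l₁ ++ l₂) := by
  rw [pathVertices, List.scanl_append]
  exact List.mem_append_left _ (List.mem_of_getLast? List.getLast?_scanl)

lemma apply_eq_flipped_of_first_step {a : Pt} {j : ℕ} {p q : List ℤ} {e : ℤ}
    (hp : ∀ x ∈ p, x.natAbs ≠ j) (he0 : e ≠ 0) (he : e.natAbs = j)
    (hbin : ∀ v ∈ pathVertices a (p ++ e :: q), v j = 0 ∨ v j = 1) :
    a j = flipped e := by
  have hbefore := hbin _ (foldl_move_mem_pathVertices a p (e :: q))
  have hafter := hbin _ (by simpa using foldl_move_mem_pathVertices a (p ++ [e]) q)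
  rw [foldl_move_apply_of_forall_natAbs_ne hp] at hbefore
  simp only [move, he, if_true, foldl_move_apply_of_forall_natAbs_ne hp] at hafter
  rcases he0.lt_or_gt with hneg | hpos
  · simp only [flipped, hneg, if_true, Int.sign_eq_neg_one_of_neg hneg] at hafter ⊢
    omega
  · simp only [flipped, hpos.not_gt, if_false, Int.sign_eq_one_of_pos hpos] at hafter ⊢
    omega

lemma flipped_sign_mul {i j : ℤ} (hj : 0 < j) : flipped (i.sign * j) = flipped i := by
  rcases lt_trichotomy i 0 with hi | rfl | hi
  · simp [flipped, Int.sign_eq_neg_one_of_neg hi, hi, hj]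
  · simp [flipped]
  · simp [flipped, Int.sign_eq_one_of_pos hi, hi.not_gt, hj.le]

namespace SignedPerm

variable {d : ℕ} (σ : SignedPerm d)

lemma natAbs_eq_of_natAbs_f_eq {x : ℤ} {j : ℕ} (hx : IsDir d x) (hj : (σ.f x).natAbs = j) :
    x.natAbs = (σ.inv j).natAbs := by
  rw [← σ.left_inv x hx]
  rcases Int.natAbs_eq_iff.mp hj with h | h
  · rw [h]
  · rw [h, σ.neg_inv, Int.natAbs_neg]

lemma f_natAbs_inv {j : ℤ} (hj : IsDir d j) : σ.f (σ.inv j).natAbs = (σ.inv j).sign * j := by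
  rcases le_or_gt 0 (σ.inv j) with h | h
  · rw [Int.natAbs_of_nonneg h, σ.right_inv j hj, Int.sign_eq_one_of_pos
      (lt_of_le_of_ne h (σ.maps_inv j hj).1.symm), one_mul]
  · rw [Int.ofNat_natAbs_of_nonpos h.le, σ.neg, σ.right_inv j hj, Int.sign_eq_neg_one_of_neg h,
      neg_one_mul]

lemma start_apply_eq_flipped_inv {a : Pt} {j : ℕ} (hj1 : 1 ≤ j) (hjd : j ≤ d)
    (hbin : ∀ v ∈ pathVertices a ((G d).map σ.f), v j = 0 ∨ v j = 1) :
    a j = flipped (σ.inv j) := by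
  have hj : IsDir d j := ⟨by omega, by simpa using hjd⟩
  obtain ⟨hi0, hid⟩ := σ.maps_inv j hj
  have hi1 : 1 ≤ (σ.inv j).natAbs := Int.natAbs_pos.mpr hi0
  obtain ⟨q, hq⟩ := G_eq_append_cons hi1 hid
  have hfi := σ.f_natAbs_inv hj
  rw [hq, List.map_append, List.map_cons] at hbin
  rw [apply_eq_flipped_of_first_step _ _ _ hbin, hfi, flipped_sign_mul (by omega)]
  · intro y hy hyj
    obtain ⟨x, hx, rfl⟩ := List.mem_map.mp hy
    obtain ⟨hx0, hxi⟩ := isDir_of_mem_G hx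
    have := σ.natAbs_eq_of_natAbs_f_eq ⟨hx0, by omega⟩ hyj
    omega
  · rw [hfi]; exact mul_ne_zero (mt Int.sign_eq_zero_iff_zero.mp hi0) (by omega)
  · rw [hfi, Int.natAbs_mul, Int.natAbs_sign_of_ne_zero hi0, one_mul, Int.natAbs_natCast]

end SignedPerm

theorem gray_image_endpoints_general (d : ℕ) (σ : SignedPerm d) (a : Pt)
    (hset : ∀ v : Pt, v ∈ pathVertices a ((G d).map σ.f) ↔
      ((∀ j, 1 ≤ j → j ≤ d → v j = 0 ∨ v j = 1) ∧ ∀ j, j = 0 ∨ d < j → v j = 0)) :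
    (∀ j, 1 ≤ j → j ≤ d → a j = flipped (σ.inv (j : ℤ))) ∧
    ∀ b : Pt, (pathVertices a ((G d).map σ.f)).getLast? = some b →
      (b = move a (σ.f (d : ℤ)) ∧
        ∀ j, 1 ≤ j → j ≤ d →
          (j = (σ.f (d : ℤ)).natAbs → b j = 1 - a j) ∧
          (j ≠ (σ.f (d : ℤ)).natAbs → b j = a j)) := by
  have hbin : ∀ v ∈ pathVertices a ((G d).map σ.f), ∀ j, 1 ≤ j → j ≤ d → v j = 0 ∨ v j = 1 :=
    fun v hv => ((hset v).mp hv).1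
  refine ⟨fun j hj1 hjd => σ.start_apply_eq_flipped_inv hj1 hjd fun v hv => hbin v hv j hj1 hjd,
    fun b hlast => ?_⟩
  have hb : b = move a (σ.f d) := by
    rw [pathVertices, List.getLast?_scanl, foldl_move_map_G σ.neg] at hlast
    exact (Option.some.inj hlast).symm
  refine ⟨hb, fun j hj1 hjd => ⟨fun hj => ?_, fun hj => by simp [hb, move, hj]⟩⟩
  have hbj : b j = a j + (σ.f d).sign := by simp [hb, move, hj]
  have hsign : (σ.f d).sign ≠ 0 :=
    mt Int.sign_eq_zero_iff_zero.mp (σ.maps d ⟨by omega, by simp⟩).1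
  have ha01 := hbin a (by simpa using foldl_move_mem_pathVertices a [] ((G d).map σ.f)) j hj1 hjd
  have hb01 := hbin b (List.mem_of_getLast? hlast) j hj1 hjd
  omega

/-- Let `σ` be a signed permutation and let `P` be the path on
`{0,1}^d` whose edge directions are `σ` applied to the directions of `G(d)`.
Then (i) the first vertex `a` satisfies `a[j] = flipped(σ⁻¹(j))`;
(ii) the vector from the first to the last vertex has direction `σ(d)`;
(iii) the last vertex `b` satisfies `b[j] = 1 − a[j]` for `j = |σ(d)|`,
and `b[j] = a[j]` otherwise. -/
theorem gray_image_endpoints (d : ℕ) (hd : 1 ≤ d) (σ : SignedPerm d) (a : Pt)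
    (hsupp : ∀ j, j = 0 ∨ d < j → a j = 0)
    (hset : ∀ v : Pt, v ∈ pathVertices a ((G d).map σ.f) ↔
      ((∀ j, 1 ≤ j → j ≤ d → v j = 0 ∨ v j = 1) ∧ ∀ j, j = 0 ∨ d < j → v j = 0)) :
    (∀ j, 1 ≤ j → j ≤ d → a j = flipped (σ.inv (j : ℤ))) ∧
    ∀ b : Pt, (pathVertices a ((G d).map σ.f)).getLast? = some b →
      (b = move a (σ.f (d : ℤ)) ∧
        ∀ j, 1 ≤ j → j ≤ d →
          (j = (σ.f (d : ℤ)).natAbs → b j = 1 - a j) ∧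
          (j ≠ (σ.f (d : ℤ)).natAbs → b j = a j)) :=
  gray_image_endpoints_general d σ a hset
end
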